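/- Let ≻₁ and ≻₂ be hope-and-prepare preferences with representations (u, C₁, D₁) and (u, C₂, D₂) respectively, with the same utility function u. Then ≻₁ is more ambiguity loving than ≻₂ if and only if D₂ ⊆ D₁. -/

import Mathlib

/-!
Framework: Anscombe–Aumann acts, finitely additive probability measures,
simple acts, hope-and-prepare preferences (Bastianello–Hill style setup).
-/

open Set

section Framework

variable (S : Type*) [MeasurableSpace S]

/-- The measurable sets (events) of `S`, as a subtype. -/
abbrev MSet := {A : Set S // MeasurableSet A}

/-- Finitely additive probability measures on `(S, Σ)`, viewed as real-valued
set functions on events.  The weak* topology is the topology of pointwise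
convergence on events, i.e. the product topology on `MSet S → ℝ`. -/
def ProbCharges : Set (MSet S → ℝ) :=
  {p | (∀ A, 0 ≤ p A) ∧ p ⟨Set.univ, MeasurableSet.univ⟩ = 1 ∧
    ∀ A B : MSet S, Disjoint A.1 B.1 → p ⟨A.1 ∪ B.1, A.2.union B.2⟩ = p A + p B}

end Framework

section Fns

variable {S : Type*} [MeasurableSpace S]

/-- `φ : S → ℝ` is a measurable simple function (an element of `B₀(Σ)`). -/
def IsSimpleFn (φ : S → ℝ) : Prop :=
  (Set.range φ).Finite ∧ ∀ y : ℝ, MeasurableSet (φ ⁻¹' {y})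

/-- The integral `∫ φ dp` of a simple function `φ` against a finitely additive
measure `p` (junk value `0` if `φ` is not simple). -/
noncomputable def fInt (p : MSet S → ℝ) (φ : S → ℝ) : ℝ :=
  @dite _ (IsSimpleFn φ) (Classical.dec _)
    (fun h => ∑ y ∈ h.1.toFinset, y * p ⟨φ ⁻¹' {y}, h.2 y⟩) (fun _ => 0)

/-- A functional `I : B₀(Σ) → ℝ` is monotonic. -/
def MonotonicFn (I : (S → ℝ) → ℝ) : Prop :=
  ∀ φ ψ, IsSimpleFn φ → IsSimpleFn ψ → (∀ s, φ s ≤ ψ s) → I φ ≤ I ψ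

/-- A functional `I : B₀(Σ) → ℝ` is constant-linear: `I(aφ + b) = a I(φ) + b`
for `a ≥ 0`, `b ∈ ℝ`. -/
def ConstLinearFn (I : (S → ℝ) → ℝ) : Prop :=
  ∀ φ, IsSimpleFn φ → ∀ a : ℝ, 0 ≤ a → ∀ b : ℝ,
    I (fun s => a * φ s + b) = a * I φ + b

end Fns

section Acts

variable {S : Type*} [MeasurableSpace S] {V : Type*} [AddCommGroup V] [Module ℝ V]

/-- `f : S → V` is a simple act with outcomes in `X`: it is `X`-valued,
takes finitely many values and is `Σ`-measurable. -/
def IsAct (X : Set V) (f : S → V) : Prop :=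
  (∀ s, f s ∈ X) ∧ (Set.range f).Finite ∧ ∀ v : V, MeasurableSet (f ⁻¹' {v})

/-- Pointwise mixture `αf + (1-α)g` of two acts. -/
def mixAct (α : ℝ) (f g : S → V) : S → V := fun s => α • f s + (1 - α) • g s

/-- The constant act with outcome `x`. -/
def constAct (S : Type*) {V : Type*} (x : V) : S → V := fun _ => x

/-- `u : V → ℝ` is affine on the convex set `X`. -/
def IsAffineOn (u : V → ℝ) (X : Set V) : Prop :=
  ∀ x ∈ X, ∀ y ∈ X, ∀ α : ℝ, 0 ≤ α → α ≤ 1 →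
    u (α • x + (1 - α) • y) = α * u x + (1 - α) * u y

/-- `u` is non-constant on `X`. -/
def NonConstOn (u : V → ℝ) (X : Set V) : Prop := ∃ x ∈ X, ∃ y ∈ X, u x ≠ u y

/-- Expected utility `∫ u(f) dp` of the act `f` under the measure `p`. -/
noncomputable def EU (u : V → ℝ) (f : S → V) (p : MSet S → ℝ) : ℝ :=
  fInt p (fun s => u (f s))

/-- Worst-case expected utility of `f` over the set of scenarios `C`. -/
noncomputable def minEU (u : V → ℝ) (C : Set (MSet S → ℝ)) (f : S → V) : ℝ :=
  sInf (EU u f '' C)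

/-- Best-case expected utility of `f` over the set of scenarios `D`. -/
noncomputable def maxEU (u : V → ℝ) (D : Set (MSet S → ℝ)) (f : S → V) : ℝ :=
  sSup (EU u f '' D)

/-- `f` and `g` are incomparable (`f ⋈ g`). -/
def Incomp (R : (S → V) → (S → V) → Prop) (f g : S → V) : Prop := ¬ R f g ∧ ¬ R g f

end Acts

section Axioms

variable {S : Type*} [MeasurableSpace S] {V : Type*} [AddCommGroup V] [Module ℝ V]
variable (X : Set V) (R : (S → V) → (S → V) → Prop)

/-- Axiom 1: `≻` is asymmetric and transitive on acts, and its restriction to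
constant acts is non-trivial and negatively transitive. -/
def PrefAx1 : Prop :=
  (∀ f g, IsAct X f → IsAct X g → R f g → ¬ R g f) ∧
  (∀ f g h, IsAct X f → IsAct X g → IsAct X h → R f g → R g h → R f h) ∧
  (∃ x ∈ X, ∃ y ∈ X, R (constAct S x) (constAct S y)) ∧
  (∀ x ∈ X, ∀ y ∈ X, ∀ z ∈ X, ¬ R (constAct S x) (constAct S y) →
    ¬ R (constAct S y) (constAct S z) → ¬ R (constAct S x) (constAct S z))

/-- Axiom 2 (continuity). -/
def PrefAx2 : Prop :=
  ∀ f g h, IsAct X f → IsAct X g → IsAct X h →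
    IsOpen {α : Set.Icc (0 : ℝ) 1 | R (mixAct (α : ℝ) f g) h} ∧
    IsOpen {α : Set.Icc (0 : ℝ) 1 | R h (mixAct (α : ℝ) f g)}

/-- Axiom 3 (certainty independence). -/
def PrefAx3 : Prop :=
  ∀ f g, IsAct X f → IsAct X g → ∀ x ∈ X, ∀ α : ℝ, 0 < α → α < 1 →
    (R f g ↔ R (mixAct α f (constAct S x)) (mixAct α g (constAct S x)))

/-- Axiom 4: for any outcome `x`, the upper and lower contour sets at the
constant act `x` are convex. -/
def PrefAx4 : Prop :=
  ∀ x ∈ X,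
    (∀ f g, IsAct X f → IsAct X g → R f (constAct S x) → R g (constAct S x) →
      ∀ α : ℝ, 0 ≤ α → α ≤ 1 → R (mixAct α f g) (constAct S x)) ∧
    (∀ f g, IsAct X f → IsAct X g → R (constAct S x) f → R (constAct S x) g →
      ∀ α : ℝ, 0 ≤ α → α ≤ 1 → R (constAct S x) (mixAct α f g))

/-- Axiom 5 (monotonicity). -/
def PrefAx5 : Prop :=
  ∀ f g, IsAct X f → IsAct X g →
    (∀ s : S, R (constAct S (f s)) (constAct S (g s))) → R f g

/-- Axiom 6: if every outcome incomparable to `f` is incomparable to `g`,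
then `f` and `g` are incomparable. -/
def PrefAx6 : Prop :=
  ∀ f g, IsAct X f → IsAct X g →
    (∀ x ∈ X, Incomp R f (constAct S x) → Incomp R g (constAct S x)) → Incomp R f g

/-- Axiom 7: if `f ⋈ x`, `x ≻ g`, `g ⋈ y` and `f ≻ y`, then `f ≻ g`. -/
def PrefAx7 : Prop :=
  ∀ f g, IsAct X f → IsAct X g → ∀ x ∈ X, ∀ y ∈ X,
    Incomp R f (constAct S x) → R (constAct S x) g →
    Incomp R g (constAct S y) → R f (constAct S y) → R f g

end Axioms

section Reps

variable {S : Type*} [MeasurableSpace S] {V : Type*} [AddCommGroup V] [Module ℝ V]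

/-- `(u, C, D)` is a hope-and-prepare representation of `R`. -/
def IsHPRep (X : Set V) (R : (S → V) → (S → V) → Prop) (u : V → ℝ)
    (C D : Set (MSet S → ℝ)) : Prop :=
  IsAffineOn u X ∧ NonConstOn u X ∧
  C.Nonempty ∧ D.Nonempty ∧ C ⊆ ProbCharges S ∧ D ⊆ ProbCharges S ∧
  IsCompact C ∧ IsCompact D ∧ Convex ℝ C ∧ Convex ℝ D ∧ (C ∩ D).Nonempty ∧
  ∀ f g, IsAct X f → IsAct X g →
    (R f g ↔ (minEU u C g < minEU u C f ∧ maxEU u D g < maxEU u D f))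

/-- `(u, C)` is a Bewley representation of `R`. -/
def IsBewleyRep (X : Set V) (R : (S → V) → (S → V) → Prop) (u : V → ℝ)
    (C : Set (MSet S → ℝ)) : Prop :=
  IsAffineOn u X ∧ NonConstOn u X ∧
  C.Nonempty ∧ C ⊆ ProbCharges S ∧ IsCompact C ∧ Convex ℝ C ∧
  ∀ f g, IsAct X f → IsAct X g → (R f g ↔ ∀ p ∈ C, EU u g p < EU u f p)

/-- `(u, C, D)` is a twofold multi-prior representation of `R`. -/
def IsTwofoldRep (X : Set V) (R : (S → V) → (S → V) → Prop) (u : V → ℝ)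
    (C D : Set (MSet S → ℝ)) : Prop :=
  IsAffineOn u X ∧ NonConstOn u X ∧
  C.Nonempty ∧ D.Nonempty ∧ C ⊆ ProbCharges S ∧ D ⊆ ProbCharges S ∧
  IsCompact C ∧ IsCompact D ∧ Convex ℝ C ∧ Convex ℝ D ∧ (C ∩ D).Nonempty ∧
  ∀ f g, IsAct X f → IsAct X g → (R f g ↔ maxEU u D g < minEU u C f)

end Reps

/-!
For a hope-and-prepare preference, `x ≻ f` holds iff `u x > ∫ u(f) dp` for every `p ∈ D`: the
comparison on `C` then follows through a common prior of `C ∩ D`. So `D₂ ⊆ D₁` makes `≻₁` more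
ambiguity loving than `≻₂` directly. Conversely, for `q ∈ D₂ \ D₁`, strict separation of `q` from
the compact convex set `D₁` gives a weak* continuous linear functional, which only sees finitely many
events. A positive affine transform of the corresponding combination of indicators is the utility
profile of an act `f`, and an outcome `x` with utility at the separating level has `x ≻₁ f` but not
`x ≻₂ f`.
-/

open MeasureTheory

section Charges

variable {S : Type*} [MeasurableSpace S] {p : MSet S → ℝ}

theorem ProbCharges.apply_empty (hp : p ∈ ProbCharges S) : p ⟨∅, .empty⟩ = 0 := by
  have h := hp.2.2 ⟨∅, .empty⟩ ⟨∅, .empty⟩ (disjoint_empty _)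
  rw [show p ⟨∅ ∪ ∅, _⟩ = p ⟨∅, .empty⟩ from congrArg p (Subtype.ext (union_self ∅))] at h
  linarith

theorem ProbCharges.apply_biUnion {κ : Type*} (hp : p ∈ ProbCharges S) (t : Finset κ)
    {E : κ → Set S} (hE : ∀ i, MeasurableSet (E i)) (hdisj : (t : Set κ).PairwiseDisjoint E) :
    p ⟨⋃ i ∈ t, E i, t.measurableSet_biUnion fun i _ => hE i⟩ = ∑ i ∈ t, p ⟨E i, hE i⟩ := by
  classical
  induction t using Finset.induction_on with
  | empty =>
    simpa only [Finset.notMem_empty, iUnion_of_empty, iUnion_empty, Finset.sum_empty]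
      using ProbCharges.apply_empty hp
  | insert a t ha ih =>
    have hdisj_a : Disjoint (E a) (⋃ i ∈ t, E i) :=
      disjoint_iUnion₂_right.2 fun i hi =>
        hdisj (by simp) (by simp [hi]) (ne_of_mem_of_not_mem hi ha).symm
    rw [Finset.sum_insert ha, ← ih (hdisj.subset (by simp)),
      ← hp.2.2 ⟨E a, hE a⟩ ⟨_, t.measurableSet_biUnion fun i _ => hE i⟩ hdisj_a]
    exact congrArg p (Subtype.ext (Finset.set_biUnion_insert a t E))

end Charges

section Integral

variable {S : Type*} [MeasurableSpace S] {p : MSet S → ℝ}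

theorem fInt_eq_sum {φ : S → ℝ} (hφ : IsSimpleFn φ) (p : MSet S → ℝ) :
    fInt p φ = ∑ y ∈ hφ.1.toFinset, y * p ⟨φ ⁻¹' {y}, hφ.2 y⟩ :=
  dif_pos hφ

theorem continuous_fInt {φ : S → ℝ} (hφ : IsSimpleFn φ) :
    Continuous fun p : MSet S → ℝ => fInt p φ := by
  simp only [fInt_eq_sum hφ]
  exact continuous_finsetSum _ fun y _ => continuous_const.mul (continuous_apply _)

theorem MeasureTheory.SimpleFunc.isSimpleFn (φ : SimpleFunc S ℝ) : IsSimpleFn φ :=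
  ⟨φ.finite_range, φ.measurableSet_fiber⟩

theorem fInt_comp {κ : Type*} (hp : p ∈ ProbCharges S) (σ : SimpleFunc S κ) (v : κ → ℝ)
    {t : Finset κ} (ht : ∀ s, σ s ∈ t) :
    fInt p (v ∘ σ) = ∑ k ∈ t, v k * p ⟨σ ⁻¹' {k}, σ.measurableSet_fiber k⟩ := by
  classical
  have hφ : IsSimpleFn (v ∘ σ) := (σ.map v).isSimpleFn
  have hfiber (y : ℝ) : p ⟨(v ∘ σ) ⁻¹' {y}, hφ.2 y⟩
      = ∑ k ∈ t with v k = y, p ⟨σ ⁻¹' {k}, σ.measurableSet_fiber k⟩ := by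
    rw [← ProbCharges.apply_biUnion hp _ σ.measurableSet_fiber
      ((pairwiseDisjoint_fiber σ univ).subset (subset_univ _))]
    exact congrArg p (Subtype.ext (by ext s; simp [ht s]))
  rw [fInt_eq_sum hφ]
  calc ∑ y ∈ hφ.1.toFinset, y * p ⟨(v ∘ σ) ⁻¹' {y}, hφ.2 y⟩
      = ∑ y ∈ hφ.1.toFinset, ∑ k ∈ t with v k = y,
          v k * p ⟨σ ⁻¹' {k}, σ.measurableSet_fiber k⟩ := by
        refine Finset.sum_congr rfl fun y _ => ?_
        rw [hfiber, Finset.mul_sum]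
        exact Finset.sum_congr rfl fun k hk => by rw [(Finset.mem_filter.1 hk).2]
    _ = ∑ k ∈ t with v k ∈ hφ.1.toFinset, v k * p ⟨σ ⁻¹' {k}, σ.measurableSet_fiber k⟩ :=
        Finset.sum_fiberwise_eq_sum_filter _ _ _ _
    _ = ∑ k ∈ t, v k * p ⟨σ ⁻¹' {k}, σ.measurableSet_fiber k⟩ := by
        -- indices outside the range of `σ` have empty fibers, hence weight zero
        refine Finset.sum_filter_of_ne fun k _ hk => ?_
        obtain ⟨s, rfl⟩ : k ∈ range σ := by
          by_contra hks
          refine hk ?_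
          rw [(congrArg p (Subtype.ext (preimage_singleton_eq_empty.2 hks))).trans
            (ProbCharges.apply_empty hp), mul_zero]
        simp

theorem fInt_const (hp : p ∈ ProbCharges S) (c : ℝ) : fInt p (fun _ : S => c) = c := by
  rw [show (fun _ : S => c) = id ∘ SimpleFunc.const S c from rfl,
    fInt_comp hp _ _ (t := {c}) (by simp), Finset.sum_singleton, id,
    show p ⟨_, _⟩ = 1 from (congrArg p (Subtype.ext (by ext; simp))).trans hp.2.1, mul_one]

theorem fInt_add (hp : p ∈ ProbCharges S) (φ ψ : SimpleFunc S ℝ) :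
    fInt p ⇑(φ + ψ) = fInt p φ + fInt p ψ := by
  have ht : ∀ s, φ.pair ψ s ∈ (φ.pair ψ).range := (φ.pair ψ).mem_range_self
  rw [show fInt p ⇑(φ + ψ) = _ from fInt_comp hp (φ.pair ψ) (fun z => z.1 + z.2) ht,
    show fInt p φ = _ from fInt_comp hp (φ.pair ψ) Prod.fst ht,
    show fInt p ψ = _ from fInt_comp hp (φ.pair ψ) Prod.snd ht, ← Finset.sum_add_distrib]
  simp only [add_mul]

theorem fInt_smul (hp : p ∈ ProbCharges S) (c : ℝ) (φ : SimpleFunc S ℝ) :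
    fInt p ⇑(c • φ) = c * fInt p φ := by
  have ht : ∀ s, φ s ∈ φ.range := φ.mem_range_self
  rw [show fInt p ⇑(c • φ) = _ from fInt_comp hp φ (c * ·) ht,
    show fInt p φ = _ from fInt_comp hp φ id ht, Finset.mul_sum]
  simp only [id, mul_assoc]

theorem fInt_sum {ι : Type*} (hp : p ∈ ProbCharges S) (F : Finset ι)
    (φ : ι → SimpleFunc S ℝ) : fInt p ⇑(∑ i ∈ F, φ i) = ∑ i ∈ F, fInt p (φ i) := by
  classical
  induction F using Finset.induction_on with
  | empty => exact fInt_const hp 0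
  | insert a F ha ih => rw [Finset.sum_insert ha, fInt_add hp, ih, Finset.sum_insert ha]

theorem fInt_indicator (hp : p ∈ ProbCharges S) (A : MSet S) :
    fInt p ⇑((SimpleFunc.const S (1 : ℝ)).restrict A.1) = p A := by
  classical
  set σ := (SimpleFunc.const S (1 : ℝ)).restrict A.1
  have hσ : ⇑σ = A.1.indicator 1 := SimpleFunc.coe_restrict _ A.2
  rw [show fInt p σ = _ from fInt_comp hp σ id (t := {0, 1})
      (fun s => by by_cases hs : s ∈ A.1 <;> simp [hσ, hs]),
    Finset.sum_pair zero_ne_one]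
  simp only [id, zero_mul, zero_add, one_mul]
  exact congrArg p (Subtype.ext (by ext s; by_cases hs : s ∈ A.1 <;> simp [hσ, hs]))

end Integral

section Acts

variable {S : Type*} [MeasurableSpace S] {p : MSet S → ℝ}

noncomputable def indicatorComb (F : Finset (MSet S)) (c : MSet S → ℝ) : SimpleFunc S ℝ :=
  ∑ A ∈ F, c A • (SimpleFunc.const S (1 : ℝ)).restrict A.1

theorem fInt_indicatorComb (hp : p ∈ ProbCharges S) (F : Finset (MSet S)) (c : MSet S → ℝ) :
    fInt p (indicatorComb F c) = ∑ A ∈ F, c A * p A := by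
  simp only [indicatorComb, fInt_sum hp, fInt_smul hp, fInt_indicator hp]

theorem abs_indicatorComb_le (F : Finset (MSet S)) (c : MSet S → ℝ) (s : S) :
    |indicatorComb F c s| ≤ ∑ A ∈ F, |c A| := by
  classical
  induction F using Finset.induction_on with
  | empty => simp [indicatorComb]
  | insert A F hA ih =>
    simp only [indicatorComb, Finset.sum_insert hA] at ih ⊢
    refine (abs_add_le _ _).trans (add_le_add ?_ ih)
    rw [SimpleFunc.smul_apply, SimpleFunc.restrict_apply _ A.2, smul_eq_mul, abs_mul]
    exact mul_le_of_le_one_right (abs_nonneg _) (by by_cases hs : s ∈ A.1 <;> simp [hs])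

section

variable {V : Type*} {X : Set V}

theorem IsAct.isSimpleFn_comp {f : S → V} (hf : IsAct X f) (u : V → ℝ) :
    IsSimpleFn fun s => u (f s) :=
  (SimpleFunc.map u ⟨f, hf.2.2, hf.2.1⟩).isSimpleFn

theorem isAct_constAct {x : V} (hx : x ∈ X) : IsAct X (constAct S x) :=
  ⟨fun _ => hx, (SimpleFunc.const S x).finite_range, (SimpleFunc.const S x).measurableSet_fiber⟩

theorem EU_constAct (hp : p ∈ ProbCharges S) (u : V → ℝ) (x : V) :
    EU u (constAct S x) p = u x :=
  fInt_const hp (u x)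

end

variable {V : Type*} [AddCommGroup V] [Module ℝ V] {X : Set V} {u : V → ℝ}

theorem IsAffineOn.exists_section_Icc (hX : Convex ℝ X) (hu : IsAffineOn u X) {x y : V}
    (hx : x ∈ X) (hy : y ∈ X) (hxy : u x < u y) :
    ∃ γ : ℝ → V, ∀ r ∈ Icc (u x) (u y), γ r ∈ X ∧ u (γ r) = r := by
  have hd : 0 < u y - u x := sub_pos.2 hxy
  refine ⟨fun r => ((r - u x) / (u y - u x)) • y + (1 - (r - u x) / (u y - u x)) • x,
    fun r ⟨hxr, hry⟩ => ?_⟩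
  have hθ₀ : 0 ≤ (r - u x) / (u y - u x) := div_nonneg (sub_nonneg.2 hxr) hd.le
  have hθ₁ : (r - u x) / (u y - u x) ≤ 1 := (div_le_one hd).2 (by linarith)
  refine ⟨hX hy hx hθ₀ (sub_nonneg.2 hθ₁) (add_sub_cancel _ _), ?_⟩
  rw [hu y hy x hx _ hθ₀ hθ₁]
  field_simp
  ring

theorem exists_affine_mapsTo_Icc {a b : ℝ} (hab : a < b) (M : ℝ) :
    ∃ α > 0, ∃ β, ∀ r, |r| ≤ M → α * r + β ∈ Icc a b := by
  have hK : 0 < |M| + 1 := by positivity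
  refine ⟨(b - a) / (2 * (|M| + 1)), by positivity, (a + b) / 2, fun r hr => ?_⟩
  have hαr : |(b - a) / (2 * (|M| + 1)) * r| ≤ (b - a) / 2 := by
    rw [abs_mul, abs_of_pos (by positivity), div_mul_eq_mul_div, div_le_div_iff₀ (by positivity)
      two_pos]
    nlinarith [le_abs_self M, abs_nonneg r]
  constructor <;> linarith [abs_le.1 hαr]

end Acts

theorem ContinuousLinearMap.exists_finset_eq_sum_apply_single {ι : Type*} [DecidableEq ι]
    (L : (ι → ℝ) →L[ℝ] ℝ) :
    ∃ F : Finset ι, ∀ p, L p = ∑ i ∈ F, L (Pi.single i 1) * p i := by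
  have hnhds : L ⁻¹' Ioo (-1) 1 ∈ nhds (0 : ι → ℝ) :=
    L.continuous.continuousAt.preimage_mem_nhds (by simpa using Ioo_mem_nhds (by norm_num) one_pos)
  rw [nhds_pi, Filter.mem_pi] at hnhds
  obtain ⟨I, hI, W, hW, hsub⟩ := hnhds
  -- `L` is bounded on the line through `w`, hence vanishes at `w`
  have hker (w : ι → ℝ) (hw : ∀ i ∈ I, w i = 0) : L w = 0 := by
    by_contra hLw
    have hline : (L w)⁻¹ • w ∈ I.pi W := fun i hi => by
      simpa [hw i hi] using mem_of_mem_nhds (hW i)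
    simpa [inv_mul_cancel₀ hLw] using hsub hline
  refine ⟨hI.toFinset, fun p => ?_⟩
  have hrest := hker (p - ∑ i ∈ hI.toFinset, p i • Pi.single i 1) fun i hi => by
    simp [Finset.sum_apply, Pi.single_apply, hI.mem_toFinset.2 hi]
  rw [map_sub, sub_eq_zero, map_sum] at hrest
  simp [hrest, mul_comm]

section Separation

variable {S : Type*} [MeasurableSpace S] {V : Type*} [AddCommGroup V] [Module ℝ V]
  {X : Set V} {u : V → ℝ}

theorem exists_act_EU_eq_affine (hX : Convex ℝ X) (hu : IsAffineOn u X) (hnc : NonConstOn u X)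
    (L : (MSet S → ℝ) →L[ℝ] ℝ) (t : ℝ) :
    ∃ f, IsAct X f ∧ ∃ x ∈ X, ∃ α > 0, ∃ β, u x = α * t + β ∧
      ∀ p ∈ ProbCharges S, EU u f p = α * L p + β := by
  classical
  obtain ⟨F, hF⟩ := L.exists_finset_eq_sum_apply_single
  set c : MSet S → ℝ := fun A => L (Pi.single A 1)
  obtain ⟨xa, hxa, xb, hxb, hab⟩ : ∃ xa ∈ X, ∃ xb ∈ X, u xa < u xb := by
    obtain ⟨x, hx, y, hy, hxy⟩ := hnc
    rcases hxy.lt_or_gt with h | h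
    exacts [⟨x, hx, y, hy, h⟩, ⟨y, hy, x, hx, h⟩]
  obtain ⟨γ, hγ⟩ := hu.exists_section_Icc hX hxa hxb hab
  obtain ⟨α, hα, β, hαβ⟩ := exists_affine_mapsTo_Icc hab (|t| + ∑ A ∈ F, |c A|)
  set ψ : SimpleFunc S ℝ := α • indicatorComb F c + SimpleFunc.const S β
  have hψ (s : S) : ψ s ∈ Icc (u xa) (u xb) :=
    hαβ _ ((abs_indicatorComb_le F c s).trans (le_add_of_nonneg_left (abs_nonneg t)))
  have ht : α * t + β ∈ Icc (u xa) (u xb) :=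
    hαβ t (le_add_of_nonneg_right (Finset.sum_nonneg fun A _ => abs_nonneg (c A)))
  refine ⟨ψ.map γ, ⟨fun s => (hγ _ (hψ s)).1, (ψ.map γ).finite_range,
    (ψ.map γ).measurableSet_fiber⟩, γ (α * t + β), (hγ _ ht).1, α, hα, β, (hγ _ ht).2,
    fun p hp => ?_⟩
  have hutility : (fun s => u (ψ.map γ s)) = ψ := funext fun s => (hγ _ (hψ s)).2
  rw [EU, hutility, fInt_add hp, fInt_smul hp, fInt_indicatorComb hp, hF]
  exact congrArg _ (fInt_const hp β)

theorem exists_act_separating (hX : Convex ℝ X) (hu : IsAffineOn u X) (hnc : NonConstOn u X)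
    {D : Set (MSet S → ℝ)} (hDP : D ⊆ ProbCharges S) (hDc : Convex ℝ D) (hDcl : IsClosed D)
    {q : MSet S → ℝ} (hq : q ∈ ProbCharges S) (hqD : q ∉ D) :
    ∃ f, IsAct X f ∧ ∃ x ∈ X, (∀ p ∈ D, EU u f p < u x) ∧ u x < EU u f q := by
  obtain ⟨L, t, hLD, htq⟩ := geometric_hahn_banach_closed_point hDc hDcl hqD
  obtain ⟨f, hf, x, hx, α, hα, β, hux, hEU⟩ := exists_act_EU_eq_affine hX hu hnc L t
  refine ⟨f, hf, x, hx, fun p hp => ?_, ?_⟩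
  · rw [hux, hEU p (hDP hp)]
    gcongr
    exact hLD p hp
  · rw [hux, hEU q hq]
    gcongr

end Separation

theorem IsHPRep.rel_constAct_left_iff {S : Type*} [MeasurableSpace S] {V : Type*}
    [AddCommGroup V] [Module ℝ V] {X : Set V} {R : (S → V) → (S → V) → Prop} {u : V → ℝ}
    {C D : Set (MSet S → ℝ)} (h : IsHPRep X R u C D) {f : S → V} (hf : IsAct X f) {x : V}
    (hx : x ∈ X) : R (constAct S x) f ↔ ∀ p ∈ D, EU u f p < u x := by
  obtain ⟨-, -, hC, hD, hCP, hDP, hCc, hDc, -, -, ⟨p₀, hp₀C, hp₀D⟩, hrep⟩ := h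
  have hconst {E : Set (MSet S → ℝ)} (hEP : E ⊆ ProbCharges S) (hE : E.Nonempty) :
      EU u (constAct S x) '' E = {u x} :=
    (image_congr fun p hp => EU_constAct (hEP hp) u x).trans (hE.image_const _)
  have hcont : Continuous (EU u f) := continuous_fInt (hf.isSimpleFn_comp u)
  rw [hrep _ _ (isAct_constAct hx) hf, minEU, minEU, maxEU, maxEU, hconst hCP hC, hconst hDP hD,
    csInf_singleton, csSup_singleton, hDc.sSup_lt_iff_of_continuous hD hcont.continuousOn]
  refine ⟨And.right, fun H => ⟨?_, H⟩⟩
  exact (csInf_le (hCc.image hcont).bddBelow (mem_image_of_mem _ hp₀C)).trans_lt (H p₀ hp₀D)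

section Statement

variable {S : Type*} [MeasurableSpace S] [Nonempty S]
variable {V : Type*} [AddCommGroup V] [Module ℝ V]

theorem statement7_general (X : Set V) (hX : Convex ℝ X)
    (R1 R2 : (S → V) → (S → V) → Prop) (u : V → ℝ)
    (C1 D1 C2 D2 : Set (MSet S → ℝ))
    (h1 : IsHPRep X R1 u C1 D1) (h2 : IsHPRep X R2 u C2 D2) :
    (∀ f, IsAct X f → ∀ x ∈ X, R1 (constAct S x) f → R2 (constAct S x) f) ↔
      D2 ⊆ D1 := by
  constructor
  · intro hmore q hqD2
    by_contra hqD1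
    have ⟨hu, hnc, _, _, _, hD1P, _, hD1c, _, hD1v, _⟩ := h1
    have ⟨_, _, _, _, _, hD2P, _⟩ := h2
    obtain ⟨f, hf, x, hx, hD1, hq⟩ :=
      exists_act_separating hX hu hnc hD1P hD1v hD1c.isClosed (hD2P hqD2) hqD1
    have hR2 := hmore f hf x hx ((h1.rel_constAct_left_iff hf hx).2 hD1)
    exact hq.not_gt ((h2.rel_constAct_left_iff hf hx).1 hR2 q hqD2)
  · intro hsub f hf x hx hR1
    exact (h2.rel_constAct_left_iff hf hx).2 fun p hp =>
      (h1.rel_constAct_left_iff hf hx).1 hR1 p (hsub hp)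

/-- Proposition 2(ii): for hope-and-prepare preferences `≻₁`
and `≻₂` with representations `(u, C₁, D₁)` and `(u, C₂, D₂)`, `≻₁` is more
ambiguity loving than `≻₂` iff `D₂ ⊆ D₁`. -/
theorem statement7 (X : Set V) (hX : Convex ℝ X) (hX2 : ∃ x ∈ X, ∃ y ∈ X, x ≠ y)
    (R1 R2 : (S → V) → (S → V) → Prop) (u : V → ℝ)
    (C1 D1 C2 D2 : Set (MSet S → ℝ))
    (h1 : IsHPRep X R1 u C1 D1) (h2 : IsHPRep X R2 u C2 D2) :
    (∀ f, IsAct X f → ∀ x ∈ X, R1 (constAct S x) f → R2 (constAct S x) f) ↔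
      D2 ⊆ D1 :=
  statement7_general X hX R1 R2 u C1 D1 C2 D2 h1 h2

end Statement
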